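/- arXiv:1611.05717 — 6 statements merged into one kernel-verified Lean document; each statement's English description precedes it below -/
import Mathlib

section
/- Let 0 < k₁ < k₂ be real numbers and define g₁(t) = t + √(k₁ - t)·√(k₂ - t) for 0 ≤ t ≤ k₁. Then g₁ is decreasing on (0, k₁), and for all t with 0 < t < k₁ we have k₁ < g₁(t) < √(k₁ k₂). -/
theorem stmt0 (k₁ k₂ : ℝ) (hk₁ : 0 < k₁) (hk : k₁ < k₂)
    (g₁ : ℝ → ℝ) (hg : ∀ t, g₁ t = t + Real.sqrt (k₁ - t) * Real.sqrt (k₂ - t)) :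
    StrictAntiOn g₁ (Set.Ioo 0 k₁) ∧
    ∀ t, 0 < t → t < k₁ → k₁ < g₁ t ∧ g₁ t < Real.sqrt (k₁ * k₂) := by
  have sq1 : ∀ u : ℝ, u < k₁ → (Real.sqrt (k₁ - u))^2 = k₁ - u := fun u hu =>
    Real.sq_sqrt (by linarith)
  have sq2 : ∀ u : ℝ, u < k₁ → (Real.sqrt (k₂ - u))^2 = k₂ - u := fun u hu =>
    Real.sq_sqrt (by linarith)
  have pos1 : ∀ u : ℝ, u < k₁ → 0 < Real.sqrt (k₁ - u) := fun u hu =>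
    Real.sqrt_pos.mpr (by linarith)
  have pos2 : ∀ u : ℝ, u < k₁ → 0 < Real.sqrt (k₂ - u) := fun u hu =>
    Real.sqrt_pos.mpr (by linarith)
  have lt12 : ∀ u : ℝ, u < k₁ → Real.sqrt (k₁ - u) < Real.sqrt (k₂ - u) := fun u hu =>
    Real.sqrt_lt_sqrt (by linarith) (by linarith)
  have amgm : ∀ u : ℝ, u < k₁ →
      2 * (Real.sqrt (k₁ - u) * Real.sqrt (k₂ - u)) < (k₁ - u) + (k₂ - u) := by
    intro u hu
    have h := lt12 u hu
    nlinarith [sq1 u hu, sq2 u hu, mul_pos (sub_pos.mpr h) (sub_pos.mpr h)]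
  constructor
  · intro s hs t ht hst
    rw [hg, hg]
    obtain ⟨hs0, hs1⟩ := hs
    obtain ⟨ht0, ht1⟩ := ht
    set As := Real.sqrt (k₁ - s)
    set Bs := Real.sqrt (k₂ - s)
    set At := Real.sqrt (k₁ - t)
    set Bt := Real.sqrt (k₂ - t)
    have hPs : (As * Bs)^2 = (k₁ - s) * (k₂ - s) := by
      rw [mul_pow, sq1 s hs1, sq2 s hs1]
    have hPt : (At * Bt)^2 = (k₁ - t) * (k₂ - t) := by
      rw [mul_pow, sq1 t ht1, sq2 t ht1]
    have hSpos : 0 < As * Bs + At * Bt :=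
      add_pos (mul_pos (pos1 s hs1) (pos2 s hs1)) (mul_pos (pos1 t ht1) (pos2 t ht1))
    have hKS : As * Bs + At * Bt < (k₁ + k₂) - s - t := by
      have h1 := amgm s hs1
      have h2 := amgm t ht1
      linarith
    nlinarith [hPs, hPt, hSpos, hKS, hst, mul_pos (sub_pos.mpr hst)
      (sub_pos.mpr hKS), mul_pos (sub_pos.mpr hst) hSpos]
  · intro t ht0 ht1
    rw [hg]
    set A := Real.sqrt (k₁ - t)
    set B := Real.sqrt (k₂ - t)
    have hA := pos1 t ht1
    have hB := pos2 t ht1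
    have hAB := lt12 t ht1
    have hA2 := sq1 t ht1
    have hB2 := sq2 t ht1
    constructor
    · nlinarith [mul_lt_mul_of_pos_left hAB hA]
    · have hx : (0:ℝ) ≤ t + A * B := by positivity
      have h2 : (t + A * B)^2 < k₁ * k₂ := by
        nlinarith [amgm t ht1, hA2, hB2, mul_pos ht0 (sub_pos.mpr (amgm t ht1))]
      exact (Real.lt_sqrt hx).mpr h2
end

section
/- Let κ₁, κ₂ be positive reals with κ₁ < κ₂, let α ≥ 0 with α ≠ κ₁ and α ≠ κ₂, and define β_j = √(κ_j² − α²) if α < κ_j and β_j = i·√(α² − κ_j²) if α > κ_j, for j = 1, 2. Then the complex number χ = α² + β₁β₂ satisfies κ₁² < |χ| < κ₂². -/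
/-!
Write `a = α²`, `p = κ₁²`, `q = κ₂²`. For `α < κ₁` and for `α > κ₂` the number `χ` is real,
namely `a + √(p - a)√(q - a)` resp. `a - √(a - p)√(a - q)`, and it lies strictly between `p`
and `q` because the geometric mean of two distinct positive numbers lies strictly between them.
For `κ₁ < α < κ₂` we have `χ = a + i √(a - p)√(q - a)`, and `|χ|² - p² = (a - p)(p + q)`,
`q² - |χ|² = (q - a)(p + q)`.
-/

open Complex Set

theorem sqrt_mul_sqrt_mem_Ioo {u v : ℝ} (hu : 0 < u) (huv : u < v) :
    √u * √v ∈ Ioo u v := by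
  have hsu : √u < √v := Real.sqrt_lt_sqrt hu.le huv
  have hu' : 0 < √u := Real.sqrt_pos.mpr hu
  constructor
  · calc u = √u * √u := (Real.mul_self_sqrt hu.le).symm
      _ < √u * √v := mul_lt_mul_of_pos_left hsu hu'
  · calc √u * √v < √v * √v := mul_lt_mul_of_pos_right hsu (hu'.trans hsu)
      _ = v := Real.mul_self_sqrt (hu.trans huv).le

theorem add_sqrt_mul_sqrt_mem_Ioo {p q a : ℝ} (hap : a < p) (hpq : p < q) :
    a + √(p - a) * √(q - a) ∈ Ioo p q := by
  obtain ⟨hlo, hhi⟩ := sqrt_mul_sqrt_mem_Ioo (sub_pos.mpr hap) (sub_lt_sub_right hpq a)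
  constructor <;> linarith

theorem sub_sqrt_mul_sqrt_mem_Ioo {p q a : ℝ} (hpq : p < q) (hqa : q < a) :
    a - √(a - p) * √(a - q) ∈ Ioo p q := by
  rw [mul_comm]
  obtain ⟨hlo, hhi⟩ := sqrt_mul_sqrt_mem_Ioo (sub_pos.mpr hqa) (sub_lt_sub_left hpq a)
  constructor <;> linarith

theorem norm_ofReal_add_I_mul_sqrt_mem_Ioo {p q a : ℝ} (hp : 0 < p) (hpa : p < a)
    (haq : a < q) : ‖(a : ℂ) + I * ((√(a - p) * √(q - a) : ℝ) : ℂ)‖ ∈ Ioo p q := by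
  have hnorm_sq : ‖(a : ℂ) + I * ((√(a - p) * √(q - a) : ℝ) : ℂ)‖ ^ 2
      = a ^ 2 + (a - p) * (q - a) := by
    rw [Complex.sq_norm, mul_comm I, normSq_add_mul_I, mul_pow,
      Real.sq_sqrt (sub_pos.mpr hpa).le, Real.sq_sqrt (sub_pos.mpr haq).le]
  have hlo : p ^ 2 < a ^ 2 + (a - p) * (q - a) := by nlinarith
  have hhi : a ^ 2 + (a - p) * (q - a) < q ^ 2 := by nlinarith
  constructor
  · exact lt_of_pow_lt_pow_left₀ 2 (norm_nonneg _) (hnorm_sq ▸ hlo)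
  · exact lt_of_pow_lt_pow_left₀ 2 (by linarith) (hnorm_sq ▸ hhi)

theorem norm_ofReal_mem_Ioo {p q r : ℝ} (hp : 0 < p) (hr : r ∈ Ioo p q) :
    ‖(r : ℂ)‖ ∈ Ioo p q := by
  rwa [norm_real, Real.norm_of_nonneg (hp.trans hr.1).le]

theorem stmt3 (κ₁ κ₂ α : ℝ) (hκ₁ : 0 < κ₁) (hκ : κ₁ < κ₂)
    (hα : 0 ≤ α) (hα₁ : α ≠ κ₁) (hα₂ : α ≠ κ₂)
    (β₁ β₂ : ℂ)
    (hβ₁ : β₁ = if α < κ₁ then (Real.sqrt (κ₁ ^ 2 - α ^ 2) : ℂ)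
      else Complex.I * Real.sqrt (α ^ 2 - κ₁ ^ 2))
    (hβ₂ : β₂ = if α < κ₂ then (Real.sqrt (κ₂ ^ 2 - α ^ 2) : ℂ)
      else Complex.I * Real.sqrt (α ^ 2 - κ₂ ^ 2))
    (χ : ℂ) (hχ : χ = (α : ℂ) ^ 2 + β₁ * β₂) :
    κ₁ ^ 2 < ‖χ‖ ∧ ‖χ‖ < κ₂ ^ 2 := by
  subst hχ hβ₁ hβ₂
  rw [← mem_Ioo]
  have hp : 0 < κ₁ ^ 2 := by positivity
  have hpq : κ₁ ^ 2 < κ₂ ^ 2 := pow_lt_pow_left₀ hκ hκ₁.le two_ne_zero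
  rcases lt_or_gt_of_ne hα₁ with h₁ | h₁
  · have hap : α ^ 2 < κ₁ ^ 2 := pow_lt_pow_left₀ h₁ hα two_ne_zero
    rw [if_pos h₁, if_pos (h₁.trans hκ)]
    convert norm_ofReal_mem_Ioo hp (add_sqrt_mul_sqrt_mem_Ioo hap hpq) using 3
    push_cast; ring
  have hpa : κ₁ ^ 2 < α ^ 2 := pow_lt_pow_left₀ h₁ hκ₁.le two_ne_zero
  rw [if_neg h₁.not_gt]
  rcases lt_or_gt_of_ne hα₂ with h₂ | h₂
  · have haq : α ^ 2 < κ₂ ^ 2 := pow_lt_pow_left₀ h₂ hα two_ne_zero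
    rw [if_pos h₂]
    convert norm_ofReal_add_I_mul_sqrt_mem_Ioo hp hpa haq using 2
    push_cast; ring
  · have hqa : κ₂ ^ 2 < α ^ 2 := pow_lt_pow_left₀ h₂ (hκ₁.trans hκ).le two_ne_zero
    rw [if_neg h₂.not_gt]
    convert norm_ofReal_mem_Ioo hp (sub_sqrt_mul_sqrt_mem_Ioo hpq hqa) using 3
    push_cast
    linear_combination (√(α ^ 2 - κ₁ ^ 2) * √(α ^ 2 - κ₂ ^ 2) : ℂ) * I_sq
end

section
/- Let a < h be real, let A ≥ 0 be real, and let u : [a, h] → ℂ be continuously differentiable. Then (1 + A²)^{1/2} |u(h)|² ≤ (1 + (h − a)^{-1}) (1 + A²) ∫_a^h |u(t)|² dt + ∫_a^h |u'(t)|² dt. -/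
/-!
Differentiating `‖u‖²` and bounding its derivative `2 ⟪u, u'⟫` by `2 ‖u‖ ‖u'‖` gives
`‖u h‖² ≤ ‖u t‖² + ∫ₐʰ 2 ‖u‖ ‖u'‖` for every `t ∈ [a, h]`; averaging over `t` yields the trace
estimate `‖u h‖² ≤ (h - a)⁻¹ ∫ ‖u‖² + ∫ 2 ‖u‖ ‖u'‖`. Young's inequality with weight
`B = √(1 + A²)` splits the last integral into `B ∫ ‖u‖² + B⁻¹ ∫ ‖u'‖²`, and multiplying by `B`
together with `B ≤ B² = 1 + A²` gives the claim.
-/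

open Set intervalIntegral
open MeasureTheory (volume)

section TraceEstimate

variable {E : Type*} [NormedAddCommGroup E] [InnerProductSpace ℝ E] {f f' : ℝ → E} {a b : ℝ}

theorem norm_sq_sub_norm_sq_le_integral (hab : a ≤ b)
    (hf : ∀ x ∈ Icc a b, HasDerivAt f (f' x) x) (hf' : ContinuousOn f' (Icc a b)) :
    ‖f b‖ ^ 2 - ‖f a‖ ^ 2 ≤ ∫ t in a..b, 2 * ‖f t‖ * ‖f' t‖ := by
  have hfc : ContinuousOn f (Icc a b) := HasDerivAt.continuousOn hf
  refine sub_le_integral_of_hasDeriv_right_of_le hab (hfc.norm.pow 2)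
    (fun x hx => (hf x (Ioo_subset_Icc_self hx)).norm_sq.hasDerivWithinAt)
    ((continuousOn_const.mul hfc.norm).mul hf'.norm).integrableOn_Icc (fun x _ => ?_)
  rw [mul_assoc]
  gcongr
  exact real_inner_le_norm _ _

theorem sub_mul_norm_sq_le_integral (hab : a ≤ b)
    (hf : ∀ x ∈ Icc a b, HasDerivAt f (f' x) x) (hf' : ContinuousOn f' (Icc a b)) :
    (b - a) * ‖f b‖ ^ 2 ≤
      (∫ t in a..b, ‖f t‖ ^ 2) + (b - a) * ∫ t in a..b, 2 * ‖f t‖ * ‖f' t‖ := by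
  set C := ∫ t in a..b, 2 * ‖f t‖ * ‖f' t‖
  have hfc : ContinuousOn f (Icc a b) := HasDerivAt.continuousOn hf
  have hC : IntervalIntegrable (fun t => 2 * ‖f t‖ * ‖f' t‖) volume a b :=
    ((continuousOn_const.mul hfc.norm).mul hf'.norm).intervalIntegrable_of_Icc hab
  have hpointwise : ∀ t ∈ Icc a b, ‖f b‖ ^ 2 - C ≤ ‖f t‖ ^ 2 := by
    intro t ht
    have hsub : Icc t b ⊆ Icc a b := Icc_subset_Icc_left ht.1
    have hstep := norm_sq_sub_norm_sq_le_integral ht.2 (fun x hx => hf x (hsub hx)) (hf'.mono hsub)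
    have hmono : ∫ s in t..b, 2 * ‖f s‖ * ‖f' s‖ ≤ C :=
      integral_mono_interval ht.1 ht.2 le_rfl (.of_forall fun s => by positivity) hC
    linarith
  have hint_f : IntervalIntegrable (fun t => ‖f t‖ ^ 2) volume a b :=
    (hfc.norm.pow 2).intervalIntegrable_of_Icc hab
  have havg := integral_mono_on hab intervalIntegrable_const hint_f hpointwise
  rw [integral_const, smul_eq_mul, mul_sub] at havg
  linarith

theorem norm_sq_le_integral_norm_sq_add (hab : a < b) {ε : ℝ} (hε : 0 < ε)
    (hf : ∀ x ∈ Icc a b, HasDerivAt f (f' x) x) (hf' : ContinuousOn f' (Icc a b)) :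
    ‖f b‖ ^ 2 ≤
      ((b - a)⁻¹ + ε) * (∫ t in a..b, ‖f t‖ ^ 2) + ε⁻¹ * ∫ t in a..b, ‖f' t‖ ^ 2 := by
  have hfc : ContinuousOn f (Icc a b) := HasDerivAt.continuousOn hf
  have hint_f : IntervalIntegrable (fun t => ‖f t‖ ^ 2) volume a b :=
    (hfc.norm.pow 2).intervalIntegrable_of_Icc hab.le
  have hint_f' : IntervalIntegrable (fun t => ‖f' t‖ ^ 2) volume a b :=
    (hf'.norm.pow 2).intervalIntegrable_of_Icc hab.le
  have hyoung : ∫ t in a..b, 2 * ‖f t‖ * ‖f' t‖ ≤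
      ε * (∫ t in a..b, ‖f t‖ ^ 2) + ε⁻¹ * ∫ t in a..b, ‖f' t‖ ^ 2 := by
    rw [← integral_const_mul, ← integral_const_mul,
      ← integral_add (hint_f.const_mul ε) (hint_f'.const_mul ε⁻¹)]
    exact integral_mono_on hab.le
      (((continuousOn_const.mul hfc.norm).mul hf'.norm).intervalIntegrable_of_Icc hab.le)
      ((hint_f.const_mul ε).add (hint_f'.const_mul ε⁻¹))
      (fun t _ => two_mul_le_add_mul_sq hε)
  have htrace := sub_mul_norm_sq_le_integral hab.le hf hf'
  have hpos : 0 < b - a := sub_pos.mpr hab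
  have hdiv : ‖f b‖ ^ 2 ≤
      (b - a)⁻¹ * (∫ t in a..b, ‖f t‖ ^ 2) + ∫ t in a..b, 2 * ‖f t‖ * ‖f' t‖ := by
    rw [inv_mul_eq_div, ← sub_le_iff_le_add, le_div_iff₀ hpos]
    linarith
  linarith

end TraceEstimate

theorem stmt8_general (a h A : ℝ) (hah : a < h) (u u' : ℝ → ℂ)
    (hderiv : ∀ x ∈ Set.Icc a h, HasDerivAt u (u' x) x)
    (hcont : ContinuousOn u' (Set.Icc a h)) :
    Real.sqrt (1 + A ^ 2) * ‖u h‖ ^ 2 ≤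
      (1 + (h - a)⁻¹) * (1 + A ^ 2) * (∫ t in a..h, ‖u t‖ ^ 2) +
      ∫ t in a..h, ‖u' t‖ ^ 2 := by
  set B := Real.sqrt (1 + A ^ 2)
  have hB_sq : B ^ 2 = 1 + A ^ 2 := Real.sq_sqrt (by positivity)
  have hB_one : 1 ≤ B := Real.one_le_sqrt.mpr (by nlinarith)
  have hB_pos : 0 < B := one_pos.trans_le hB_one
  have hI : 0 ≤ ∫ t in a..h, ‖u t‖ ^ 2 := integral_nonneg hah.le fun t _ => by positivity
  have hcoeff : B * ((h - a)⁻¹ + B) ≤ (1 + (h - a)⁻¹) * (1 + A ^ 2) := by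
    have hinv : 0 ≤ (h - a)⁻¹ := inv_nonneg.mpr (sub_pos.mpr hah).le
    nlinarith [mul_nonneg hinv (mul_nonneg hB_pos.le (sub_nonneg.mpr hB_one))]
  calc B * ‖u h‖ ^ 2
      ≤ B * (((h - a)⁻¹ + B) * (∫ t in a..h, ‖u t‖ ^ 2) + B⁻¹ * ∫ t in a..h, ‖u' t‖ ^ 2) :=
        mul_le_mul_of_nonneg_left (norm_sq_le_integral_norm_sq_add hah hB_pos hderiv hcont)
          hB_pos.le
    _ = B * ((h - a)⁻¹ + B) * (∫ t in a..h, ‖u t‖ ^ 2) + ∫ t in a..h, ‖u' t‖ ^ 2 := by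
        rw [mul_add, ← mul_assoc, ← mul_assoc, mul_inv_cancel₀ hB_pos.ne', one_mul]
    _ ≤ _ := by gcongr

theorem stmt8 (a h A : ℝ) (hah : a < h) (hA : 0 ≤ A) (u u' : ℝ → ℂ)
    (hderiv : ∀ x ∈ Set.Icc a h, HasDerivAt u (u' x) x)
    (hcont : ContinuousOn u' (Set.Icc a h)) :
    Real.sqrt (1 + A ^ 2) * ‖u h‖ ^ 2 ≤
      (1 + (h - a)⁻¹) * (1 + A ^ 2) * (∫ t in a..h, ‖u t‖ ^ 2) +
      ∫ t in a..h, ‖u' t‖ ^ 2 :=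
  stmt8_general a h A hah u u' hderiv hcont
end

section
/- Let Δ₁, Δ₂ > 0 with Δ₁ ≤ Δ₂ and let ζ ∈ ℂ with Im ζ > 0. Then |(e^{iΔ₂ζ} − e^{iΔ₁ζ})² / ((1 − e^{2iΔ₁ζ})(1 − e^{2iΔ₂ζ}))| ≤ 4 e^{−2Δ₁ Im ζ} / (1 − e^{−2Δ₁ Im ζ})² ≤ 4 / (e^{(Δ₁/2) Im ζ} − 1)². -/
/-!
Both `e^{iΔⱼζ}` have modulus at most `q = e^{-Δ₁ Im ζ} < 1` and both `e^{2iΔⱼζ}` modulus at most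
`q²`, so the numerator is at most `(2q)²` and each denominator factor at least `1 - q²`.
For the second bound, `4q²/(1 - q²)² = 1/sinh² t` with `t = Δ₁ Im ζ`, and
`2 sinh t = e^t - e^{-t} ≥ e^{t/2} - 1`.
-/

theorem norm_sub_sq_div_one_sub_mul_one_sub_le {u v w z : ℂ} {q : ℝ} (hu : ‖u‖ ≤ q) (hv : ‖v‖ ≤ q)
    (hw : ‖w‖ ≤ q ^ 2) (hz : ‖z‖ ≤ q ^ 2) (hq : q ^ 2 < 1) :
    ‖(u - v) ^ 2 / ((1 - w) * (1 - z))‖ ≤ 4 * q ^ 2 / (1 - q ^ 2) ^ 2 := by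
  have hnum : ‖(u - v) ^ 2‖ ≤ 4 * q ^ 2 :=
    calc ‖(u - v) ^ 2‖ = ‖u - v‖ ^ 2 := norm_pow _ _
      _ ≤ (2 * q) ^ 2 := pow_le_pow_left₀ (norm_nonneg _) (by linarith [norm_sub_le u v]) 2
      _ = 4 * q ^ 2 := by ring
  have hden {x : ℂ} (hx : ‖x‖ ≤ q ^ 2) : 1 - q ^ 2 ≤ ‖1 - x‖ := by
    linarith [norm_sub_norm_le (1 : ℂ) x, norm_one (α := ℂ)]
  have hq' : 0 < 1 - q ^ 2 := by linarith
  rw [norm_div, norm_mul, sq (1 - q ^ 2)]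
  exact div_le_div₀ (by positivity) hnum (by positivity)
    (mul_le_mul (hden hw) (hden hz) hq'.le (norm_nonneg _))

open Complex in
theorem norm_exp_I_mul_ofReal_mul_le {a b : ℝ} (hab : a ≤ b) {ζ : ℂ} (hζ : 0 ≤ ζ.im) :
    ‖exp (I * b * ζ)‖ ≤ Real.exp (-(a * ζ.im)) := by
  rw [norm_exp]
  simpa [mul_re, mul_im] using mul_le_mul_of_nonneg_right hab hζ

open Complex in
theorem norm_exp_two_mul_I_mul_ofReal_mul_le {a b : ℝ} (hab : a ≤ b) {ζ : ℂ} (hζ : 0 ≤ ζ.im) :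
    ‖exp (2 * I * b * ζ)‖ ≤ Real.exp (-(a * ζ.im)) ^ 2 := by
  rw [show 2 * I * b * ζ = ((2 : ℕ) : ℂ) * (I * b * ζ) by push_cast; ring, exp_nat_mul, norm_pow]
  exact pow_le_pow_left₀ (norm_nonneg _) (norm_exp_I_mul_ofReal_mul_le hab hζ) 2

theorem Real.four_mul_exp_neg_two_mul_div_one_sub_sq (t : ℝ) :
    4 * Real.exp (-2 * t) / (1 - Real.exp (-2 * t)) ^ 2 = 1 / Real.sinh t ^ 2 := by
  have hexp : Real.exp (-2 * t) = Real.exp (-t) ^ 2 := by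
    rw [← Real.exp_nat_mul]; ring_nf
  have hfactor : 1 - Real.exp (-2 * t) = Real.exp (-t) * (2 * Real.sinh t) := by
    have hinv : Real.exp (-t) * Real.exp t = 1 := by rw [← Real.exp_add]; simp
    rw [Real.sinh_eq, hexp]
    linear_combination -hinv
  rw [hfactor, hexp, mul_pow, mul_pow]
  field_simp [(Real.exp_pos (-t)).ne']
  norm_num

theorem Real.exp_half_sub_one_le_two_mul_sinh {t : ℝ} (ht : 0 ≤ t) :
    Real.exp (t / 2) - 1 ≤ 2 * Real.sinh t := by
  rw [Real.sinh_eq]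
  linarith [Real.exp_le_exp.2 (by linarith : t / 2 ≤ t), Real.exp_le_one_iff.2 (neg_nonpos.2 ht)]

theorem Real.one_div_sinh_sq_le {t : ℝ} (ht : 0 < t) :
    1 / Real.sinh t ^ 2 ≤ 4 / (Real.exp (t / 2) - 1) ^ 2 := by
  have hpos : 0 < Real.exp (t / 2) - 1 := by
    linarith [Real.one_lt_exp_iff.2 (half_pos ht)]
  calc 1 / Real.sinh t ^ 2 = 4 / (2 * Real.sinh t) ^ 2 := by ring
    _ ≤ 4 / (Real.exp (t / 2) - 1) ^ 2 :=
      div_le_div_of_nonneg_left (by norm_num) (by positivity)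
        (pow_le_pow_left₀ hpos.le (Real.exp_half_sub_one_le_two_mul_sinh ht.le) 2)

theorem stmt11 (Δ₁ Δ₂ : ℝ) (hΔ₁ : 0 < Δ₁) (hΔ : Δ₁ ≤ Δ₂) (ζ : ℂ) (hζ : 0 < ζ.im) :
    ‖(Complex.exp (Complex.I * Δ₂ * ζ) - Complex.exp (Complex.I * Δ₁ * ζ)) ^ 2 /
        ((1 - Complex.exp (2 * Complex.I * Δ₁ * ζ)) *
          (1 - Complex.exp (2 * Complex.I * Δ₂ * ζ)))‖ ≤
      4 * Real.exp (-2 * Δ₁ * ζ.im) / (1 - Real.exp (-2 * Δ₁ * ζ.im)) ^ 2 ∧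
    4 * Real.exp (-2 * Δ₁ * ζ.im) / (1 - Real.exp (-2 * Δ₁ * ζ.im)) ^ 2 ≤
      4 / (Real.exp (Δ₁ / 2 * ζ.im) - 1) ^ 2 := by
  have ht : 0 < Δ₁ * ζ.im := mul_pos hΔ₁ hζ
  have hsq : Real.exp (-2 * Δ₁ * ζ.im) = Real.exp (-(Δ₁ * ζ.im)) ^ 2 := by
    rw [← Real.exp_nat_mul]; ring_nf
  refine ⟨?_, ?_⟩
  · rw [hsq]
    exact norm_sub_sq_div_one_sub_mul_one_sub_le
      (norm_exp_I_mul_ofReal_mul_le hΔ hζ.le) (norm_exp_I_mul_ofReal_mul_le le_rfl hζ.le)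
      (norm_exp_two_mul_I_mul_ofReal_mul_le le_rfl hζ.le)
      (norm_exp_two_mul_I_mul_ofReal_mul_le hΔ hζ.le)
      (by rw [← hsq, Real.exp_lt_one_iff]; linarith)
  · rw [show -2 * Δ₁ * ζ.im = -2 * (Δ₁ * ζ.im) by ring, Real.four_mul_exp_neg_two_mul_div_one_sub_sq,
      show Δ₁ / 2 * ζ.im = Δ₁ * ζ.im / 2 by ring]
    exact Real.one_div_sinh_sq_le ht
end

section
/- Let Δ₁, Δ₂ > 0 with Δ₁ ≤ Δ₂ and let ζ ∈ ℂ with Im ζ > 0. Then |(e^{2iΔ₂ζ} − e^{2iΔ₁ζ}) / ((1 − e^{2iΔ₁ζ})(1 − e^{2iΔ₂ζ}))| ≤ 2 e^{−2Δ₁ Im ζ} / (1 − e^{−2Δ₁ Im ζ})² ≤ 2 / (e^{(Δ₁/2) Im ζ} − 1)². -/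
open Complex

/-- For `‖w‖ ≤ ‖z‖ = r < 1`: the numerator is at most `2r`, each factor of the denominator at
least `1 - r`. -/
theorem norm_sub_div_one_sub_mul_one_sub_le {z w : ℂ} (hwz : ‖w‖ ≤ ‖z‖) (hz : ‖z‖ < 1) :
    ‖(w - z) / ((1 - z) * (1 - w))‖ ≤ 2 * ‖z‖ / (1 - ‖z‖) ^ 2 := by
  have hz_le : 1 - ‖z‖ ≤ ‖1 - z‖ := by simpa using norm_sub_norm_le (1 : ℂ) z
  have hw_le : 1 - ‖z‖ ≤ ‖1 - w‖ := by
    have := norm_sub_norm_le (1 : ℂ) w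
    rw [norm_one] at this
    linarith
  rw [norm_div, norm_mul]
  apply div_le_div₀ (by positivity)
  · calc ‖w - z‖ ≤ ‖w‖ + ‖z‖ := norm_sub_le w z
      _ ≤ 2 * ‖z‖ := by linarith
  · nlinarith
  · rw [sq]
    exact mul_le_mul hz_le hw_le (by linarith) (norm_nonneg _)

theorem norm_exp_two_mul_I_mul (Δ : ℝ) (ζ : ℂ) :
    ‖exp (2 * I * Δ * ζ)‖ = Real.exp (-2 * Δ * ζ.im) := by
  rw [norm_exp]
  congr 1
  simp [mul_re, mul_im]

theorem two_mul_inv_pow_four_div_le {y : ℝ} (hy : 1 < y) :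
    2 * (y ^ 4)⁻¹ / (1 - (y ^ 4)⁻¹) ^ 2 ≤ 2 / (y - 1) ^ 2 := by
  have hy4 : 1 < y ^ 4 := one_lt_pow₀ hy (by norm_num)
  have hsub : 0 < y - 1 := by linarith
  have hsub4 : 0 < y ^ 4 - 1 := by linarith
  have hlhs : 2 * (y ^ 4)⁻¹ / (1 - (y ^ 4)⁻¹) ^ 2 = 2 * y ^ 4 / (y ^ 4 - 1) ^ 2 := by
    field_simp
  rw [hlhs, div_le_div_iff₀ (by positivity) (by positivity)]
  -- `y⁴ - 1 = (y - 1)(y³ + y² + y + 1)` and `y² ≤ y³ + y² + y + 1`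
  have hfactor : y ^ 4 - 1 = (y - 1) * (y ^ 3 + y ^ 2 + y + 1) := by ring
  rw [hfactor]
  have : y ^ 2 ≤ y ^ 3 + y ^ 2 + y + 1 := by nlinarith
  have : y ^ 4 ≤ (y ^ 3 + y ^ 2 + y + 1) ^ 2 := by nlinarith
  nlinarith [sq_nonneg (y - 1)]

theorem two_mul_exp_neg_four_mul_div_le {t : ℝ} (ht : 0 < t) :
    2 * Real.exp (-(4 * t)) / (1 - Real.exp (-(4 * t))) ^ 2 ≤ 2 / (Real.exp t - 1) ^ 2 := by
  rw [Real.exp_neg, show 4 * t = (4 : ℕ) * t by norm_num, Real.exp_nat_mul]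
  exact two_mul_inv_pow_four_div_le (Real.one_lt_exp_iff.mpr ht)

theorem stmt12 (Δ₁ Δ₂ : ℝ) (hΔ₁ : 0 < Δ₁) (hΔ : Δ₁ ≤ Δ₂) (ζ : ℂ) (hζ : 0 < ζ.im) :
    ‖((Complex.exp (2 * Complex.I * Δ₂ * ζ) - Complex.exp (2 * Complex.I * Δ₁ * ζ)) /
        ((1 - Complex.exp (2 * Complex.I * Δ₁ * ζ)) *
          (1 - Complex.exp (2 * Complex.I * Δ₂ * ζ))))‖ ≤
      2 * Real.exp (-2 * Δ₁ * ζ.im) / (1 - Real.exp (-2 * Δ₁ * ζ.im)) ^ 2 ∧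
    2 * Real.exp (-2 * Δ₁ * ζ.im) / (1 - Real.exp (-2 * Δ₁ * ζ.im)) ^ 2 ≤
      2 / (Real.exp (Δ₁ / 2 * ζ.im) - 1) ^ 2 := by
  have hnorm_le : ‖exp (2 * I * Δ₂ * ζ)‖ ≤ ‖exp (2 * I * Δ₁ * ζ)‖ := by
    simp only [norm_exp_two_mul_I_mul, Real.exp_le_exp]
    nlinarith
  have hnorm_lt : ‖exp (2 * I * Δ₁ * ζ)‖ < 1 := by
    rw [norm_exp_two_mul_I_mul, Real.exp_lt_one_iff]
    nlinarith
  refine ⟨?_, ?_⟩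
  · simpa only [norm_exp_two_mul_I_mul] using
      norm_sub_div_one_sub_mul_one_sub_le hnorm_le hnorm_lt
  · rw [show -2 * Δ₁ * ζ.im = -(4 * (Δ₁ / 2 * ζ.im)) by ring]
    exact two_mul_exp_neg_four_mul_div_le (by positivity)
end

section
/- Let κ₂ > 0. For every real α with α > κ₂ and every k ∈ {3, 4, 5, 7}, α^k / e^{√(α² − κ₂²)} ≤ (κ₂² + k²)^{k/2}. -/
theorem stmt15 (κ₂ : ℝ) (hκ₂ : 0 < κ₂) :
    ∀ α : ℝ, κ₂ < α → ∀ k : ℕ, k ∈ ({3, 4, 5, 7} : Set ℕ) →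
      α ^ k / Real.exp (Real.sqrt (α ^ 2 - κ₂ ^ 2)) ≤
        (κ₂ ^ 2 + (k : ℝ) ^ 2) ^ ((k : ℝ) / 2) := by
  intro α hα k hk
  have hα0 : 0 < α := hκ₂.trans hα
  set u := Real.sqrt (α ^ 2 - κ₂ ^ 2) with hudef
  have hu0 : 0 ≤ u := Real.sqrt_nonneg _
  have hu2 : u ^ 2 = α ^ 2 - κ₂ ^ 2 := Real.sq_sqrt (by nlinarith)
  have hk3 : (3 : ℝ) ≤ (k : ℝ) := by
    rcases hk with rfl | rfl | rfl | rfl <;> norm_num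
  have hkpos : (0 : ℝ) < (k : ℝ) := by linarith
  have key : α ^ 2 ≤ (κ₂ ^ 2 + (k : ℝ) ^ 2) * Real.exp (2 * u / (k : ℝ)) := by
    have h1 : 1 + u / (k : ℝ) ≤ Real.exp (u / (k : ℝ)) := by
      have := Real.add_one_le_exp (u / (k : ℝ)); linarith
    have h2 : (1 + u / (k : ℝ)) ^ 2 ≤ Real.exp (2 * u / (k : ℝ)) := by
      have he : Real.exp (2 * u / (k : ℝ)) = Real.exp (u / (k : ℝ)) ^ 2 := by
        rw [← Real.exp_nat_mul]; ring_nf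
      rw [he]
      exact pow_le_pow_left₀ (by positivity) h1 2
    have hexpand : κ₂ ^ 2 + u ^ 2 ≤ (κ₂ ^ 2 + (k : ℝ) ^ 2) * (1 + u / (k : ℝ)) ^ 2 := by
      have hk2 : (0 : ℝ) < (k : ℝ) ^ 2 := by positivity
      have : (k : ℝ) ^ 2 * (u / (k : ℝ)) ^ 2 = u ^ 2 := by
        field_simp
      nlinarith [sq_nonneg u, mul_pos hκ₂ hκ₂, sq_nonneg (u / (k : ℝ)),
        mul_nonneg (mul_nonneg hκ₂.le hκ₂.le) (div_nonneg hu0 hkpos.le)]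
    have hpos : (0 : ℝ) < κ₂ ^ 2 + (k : ℝ) ^ 2 := by positivity
    calc α ^ 2 = κ₂ ^ 2 + u ^ 2 := by linarith [hu2]
      _ ≤ (κ₂ ^ 2 + (k : ℝ) ^ 2) * (1 + u / (k : ℝ)) ^ 2 := hexpand
      _ ≤ (κ₂ ^ 2 + (k : ℝ) ^ 2) * Real.exp (2 * u / (k : ℝ)) := by
          exact mul_le_mul_of_nonneg_left h2 hpos.le
  have hrw : (α : ℝ) ^ k = (α ^ 2) ^ ((k : ℝ) / 2) := by
    rw [← Real.rpow_natCast α k, ← Real.rpow_natCast α 2,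
      ← Real.rpow_mul hα0.le]
    push_cast
    rw [show (2 : ℝ) * ((k : ℝ) / 2) = (k : ℝ) by ring]
  have hmono : (α ^ 2) ^ ((k : ℝ) / 2) ≤
      ((κ₂ ^ 2 + (k : ℝ) ^ 2) * Real.exp (2 * u / (k : ℝ))) ^ ((k : ℝ) / 2) :=
    Real.rpow_le_rpow (by positivity) key (by positivity)
  have hsplit : ((κ₂ ^ 2 + (k : ℝ) ^ 2) * Real.exp (2 * u / (k : ℝ))) ^ ((k : ℝ) / 2)
      = (κ₂ ^ 2 + (k : ℝ) ^ 2) ^ ((k : ℝ) / 2) * Real.exp u := by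
    rw [Real.mul_rpow (by positivity) (Real.exp_pos _).le, ← Real.exp_mul]
    congr 1
    field_simp
  rw [div_le_iff₀ (Real.exp_pos _), hrw]
  calc (α ^ 2) ^ ((k : ℝ) / 2)
      ≤ ((κ₂ ^ 2 + (k : ℝ) ^ 2) * Real.exp (2 * u / (k : ℝ))) ^ ((k : ℝ) / 2) := hmono
    _ = (κ₂ ^ 2 + (k : ℝ) ^ 2) ^ ((k : ℝ) / 2) * Real.exp u := hsplit
end
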